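/- LCA via range minimum on the Euler tour: let T be a finite rooted tree with root r, let u and v be non-root vertices, let e_u = (parent(u), u) and e_v = (parent(v), v), and suppose e_u occurs before e_v in ET(T). Consider the contiguous sublist of ET(T) from e_u to e_v inclusive, and let ê = (x, y) be the first edge in this sublist whose head y has minimum depth among the heads of edges in the sublist. Then y is the lowest common ancestor of u and v in T. Moreover, if ê ≠ e_u, then x is the child of y on the tree path from y to u (so ê is the reversal of the first edge on the path from the LCA toward u). -/

import Mathlib

/-!
Induct on the tree, peeling off its first child: the tour of `node r (c :: cs)` is
`(r, c.root) :: tour c ++ (c.root, r) :: tour (node r cs)`. A segment lying inside `tour c` or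
inside `tour (node r cs)` reduces to that smaller tree, because there every root path acquires
the same prefix (`[r]`, resp. `[]`), so depths shift by a constant. Otherwise the segment either
starts with the down edge `(r, c.root)` and stays inside `c`, so its first head `c.root` already
has minimal depth and is an ancestor of `v`; or it reaches the up edge `(c.root, r)` while all
earlier heads lie in `c`, so that edge is the first one whose head has depth `0`, `r` is the
LCA, and `c.root` is the child of `r` towards `u`.
-/

/-- A finite rooted tree with vertex labels in `V` and a fixed linear order on the
children of each vertex (given by the list order). -/
inductive RTree (V : Type) : Type where
  | node (label : V) (children : List (RTree V)) : RTree V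

namespace RTree

variable {V : Type}

/-- The label of the root. -/
def root : RTree V → V
  | node x _ => x

/-- The Euler tour: `tour (node x cs)` is the concatenation, over the children `c` of `x`
in order, of `[(x, root c)] ++ tour c ++ [(root c, x)]`. -/
def tour : RTree V → List (V × V)
  | node x cs => cs.attach.flatMap (fun c => ((x, c.1.root) :: c.1.tour) ++ [(c.1.root, x)])
  decreasing_by
    have := List.sizeOf_lt_of_mem c.2
    simp only [RTree.node.sizeOf_spec]
    omega

/-- The list of vertex labels occurring in the tree. -/
def vertices : RTree V → List V
  | node x cs => x :: cs.attach.flatMap (fun c => c.1.vertices)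
  decreasing_by
    have := List.sizeOf_lt_of_mem c.2
    simp only [RTree.node.sizeOf_spec]
    omega

/-- `SubtreeAt T p t` : `t` occurs in `T` as the subtree rooted at some child occurrence,
and the parent of `t`'s root is (the vertex labelled) `p`. -/
inductive SubtreeAt : RTree V → V → RTree V → Prop
  | child {x : V} {cs : List (RTree V)} {t : RTree V} (h : t ∈ cs) :
      SubtreeAt (node x cs) x t
  | step {x : V} {cs : List (RTree V)} {c : RTree V} {p : V} {t : RTree V}
      (hc : c ∈ cs) (h : SubtreeAt c p t) : SubtreeAt (node x cs) p t

/-- `pathTo T y` : the list of vertices on the path from the root of `T` to `y`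
(inclusive), or `none` if `y` does not occur in `T`. -/
def pathTo [DecidableEq V] : RTree V → V → Option (List V)
  | node x cs, y =>
    if x = y then some [x]
    else
      match cs.attach.findSome? (fun c => c.1.pathTo y) with
      | some l => some (x :: l)
      | none => none
  decreasing_by
    have := List.sizeOf_lt_of_mem c.2
    simp only [RTree.node.sizeOf_spec]
    omega

/-- The depth of vertex `y` in `T` (number of edges on the root-to-`y` path), with
junk value `0` if `y` does not occur in `T`. -/
def depthD [DecidableEq V] (T : RTree V) (y : V) : ℕ :=
  (T.pathTo y).elim 0 (fun l => l.length - 1)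

end RTree

/-- The longest common prefix of two lists. -/
def commonPrefix {V : Type} [DecidableEq V] : List V → List V → List V
  | a :: as, b :: bs => if a = b then a :: commonPrefix as bs else []
  | _, _ => []

namespace List

variable {α : Type*}

theorem append_cons_eq_append_cons_cases {l₁ R X Y : List α} {a z : α}
    (h : l₁ ++ a :: R = X ++ z :: Y) :
    (∃ m, X = l₁ ++ a :: m ∧ R = m ++ z :: Y) ∨ (l₁ = X ∧ a = z ∧ R = Y) ∨
      ∃ m, l₁ = X ++ z :: m ∧ Y = m ++ a :: R := by
  rcases append_eq_append_iff.1 h with ⟨_ | ⟨b, m⟩, rfl, h'⟩ | ⟨_ | ⟨b, m⟩, rfl, h'⟩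
  · obtain ⟨rfl, rfl⟩ := cons_eq_cons.1 h'
    simp
  · obtain ⟨rfl, rfl⟩ := cons_eq_cons.1 h'
    exact Or.inl ⟨m, rfl, rfl⟩
  · obtain ⟨rfl, rfl⟩ := cons_eq_cons.1 h'
    simp
  · obtain ⟨rfl, rfl⟩ := cons_eq_cons.1 h'
    exact Or.inr (Or.inr ⟨m, rfl, rfl⟩)

theorem cons_append_singleton_subset (l₁ l₂ l₃ : List α) (a b : α) :
    a :: (l₂ ++ [b]) ⊆ l₁ ++ a :: (l₂ ++ b :: l₃) := by
  intro e he
  simp only [mem_cons, mem_append] at he ⊢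
  tauto

end List

section FirstMin

variable {α β γ : Type*}

def IsFirstMin [Preorder β] (f : α → β) (S : List α) (a : α) : Prop :=
  ∃ L₁ L₂, S = L₁ ++ a :: L₂ ∧ (∀ z ∈ S, f a ≤ f z) ∧ ∀ z ∈ L₁, f a < f z

theorem IsFirstMin.unique [Preorder β] {f : α → β} {S : List α} {a b : α}
    (ha : IsFirstMin f S a) (hb : IsFirstMin f S b) : a = b := by
  obtain ⟨L₁, L₂, rfl, ha_min, ha_first⟩ := ha
  obtain ⟨M₁, M₂, hS, hb_min, hb_first⟩ := hb
  rcases List.append_cons_eq_append_cons_cases hS with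
    ⟨m, rfl, -⟩ | ⟨-, rfl, -⟩ | ⟨m, rfl, -⟩
  · exact absurd (ha_min b (by rw [hS]; simp)) (hb_first a (by simp)).not_ge
  · rfl
  · exact absurd (hb_min a (by simp)) (ha_first b (by simp)).not_ge

theorem IsFirstMin.of_comp [LinearOrder β] [Preorder γ] {f : α → γ} {g : α → β}
    {φ : β → γ} (hφ : StrictMono φ) {S : List α} (hfg : ∀ z ∈ S, f z = φ (g z))
    {a : α}
    (h : IsFirstMin f S a) : IsFirstMin g S a := by
  obtain ⟨L₁, L₂, rfl, hmin, hfirst⟩ := h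
  have ha : f a = φ (g a) := hfg a (by simp)
  refine ⟨L₁, L₂, rfl, fun z hz => ?_, fun z hz => ?_⟩
  · exact hφ.le_iff_le.1 (hfg z hz ▸ ha ▸ hmin z hz)
  · exact hφ.lt_iff_lt.1 (hfg z (by simp [hz]) ▸ ha ▸ hfirst z hz)

end FirstMin

section CommonPrefix

variable {V : Type} [DecidableEq V]

@[simp]
theorem commonPrefix_nil_left (l : List V) : commonPrefix [] l = [] := by
  cases l <;> rfl

@[simp]
theorem commonPrefix_cons_cons_self (a : V) (l₁ l₂ : List V) :
    commonPrefix (a :: l₁) (a :: l₂) = a :: commonPrefix l₁ l₂ := by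
  simp [commonPrefix]

theorem commonPrefix_cons_of_notMem {a : V} {l₂ : List V} (h : a ∉ l₂) (l₁ : List V) :
    commonPrefix (a :: l₁) l₂ = [] := by
  cases l₂ with
  | nil => rfl
  | cons b l₂ => simp_all [commonPrefix, Ne.symm]

theorem commonPrefix_append_append (l l₁ l₂ : List V) :
    commonPrefix (l ++ l₁) (l ++ l₂) = l ++ commonPrefix l₁ l₂ := by
  induction l with
  | nil => rfl
  | cons a l ih => simp [ih]

end CommonPrefix

namespace RTree

variable {V : Type}

theorem cons_induction {motive : RTree V → Prop} (nil : ∀ r, motive (node r []))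
    (cons : ∀ r c cs, motive c → motive (node r cs) → motive (node r (c :: cs))) :
    ∀ t, motive t
  | node r [] => nil r
  | node r (c :: cs) =>
    cons r c cs (cons_induction nil cons c) (cons_induction nil cons (node r cs))
  termination_by t => sizeOf t

theorem tour_node (r : V) (cs : List (RTree V)) :
    (node r cs).tour = cs.flatMap fun c => (r, c.root) :: c.tour ++ [(c.root, r)] := by
  rw [tour, List.flatMap_subtype (g := fun c => (r, c.root) :: c.tour ++ [(c.root, r)])
    fun _ _ => rfl, List.unattach_attach]

theorem vertices_node (r : V) (cs : List (RTree V)) :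
    (node r cs).vertices = r :: cs.flatMap vertices := by
  rw [vertices, List.flatMap_subtype (g := vertices) fun _ _ => rfl, List.unattach_attach]

@[simp]
theorem tour_node_nil (r : V) : (node r []).tour = [] := by
  simp [tour_node]

@[simp]
theorem tour_node_cons (r : V) (c : RTree V) (cs : List (RTree V)) :
    (node r (c :: cs)).tour = ((r, c.root) :: c.tour) ++ (c.root, r) :: (node r cs).tour := by
  simp [tour_node]

@[simp]
theorem mem_vertices_node_nil {r w : V} : w ∈ (node r []).vertices ↔ w = r := by
  simp [vertices_node]

@[simp]
theorem mem_vertices_node_cons {r w : V} {c : RTree V} {cs : List (RTree V)} :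
    w ∈ (node r (c :: cs)).vertices ↔ w ∈ c.vertices ∨ w ∈ (node r cs).vertices := by
  simp only [vertices_node, List.mem_cons, List.flatMap_cons, List.mem_append]
  tauto

@[simp]
theorem mem_vertices_node_self (r : V) (cs : List (RTree V)) : r ∈ (node r cs).vertices := by
  simp [vertices_node]

theorem root_mem_vertices (t : RTree V) : t.root ∈ t.vertices := by
  obtain ⟨r, cs⟩ := t
  exact mem_vertices_node_self r cs

theorem nodup_vertices_node_cons {r : V} {c : RTree V} {cs : List (RTree V)}
    (h : (node r (c :: cs)).vertices.Nodup) :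
    c.vertices.Nodup ∧ (node r cs).vertices.Nodup ∧
      c.vertices.Disjoint (node r cs).vertices := by
  simp only [vertices_node, List.flatMap_cons, List.nodup_cons, List.nodup_append,
    List.mem_append, not_or, List.disjoint_cons_right] at h ⊢
  tauto

theorem snd_mem_vertices_of_mem_tour (t : RTree V) {e : V × V} (h : e ∈ t.tour) :
    e.2 ∈ t.vertices := by
  induction t using cons_induction with
  | nil r => simp at h
  | cons r c cs ihc ihcs =>
    simp only [tour_node_cons, List.cons_append, List.mem_cons, List.mem_append] at h
    rcases h with rfl | h | rfl | h
    · simp [root_mem_vertices]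
    · simp [ihc h]
    · simp
    · simp [ihcs h]

theorem snd_mem_vertices_of_mem_cons_tour {t : RTree V} {p : V} {e : V × V}
    (h : e ∈ (p, t.root) :: t.tour) : e.2 ∈ t.vertices := by
  rcases List.mem_cons.1 h with rfl | h
  · exact root_mem_vertices t
  · exact snd_mem_vertices_of_mem_tour t h

theorem snd_mem_vertices_of_tour_eq {t : RTree V} {l₁ l₂ l₃ : List (V × V)} {a b e : V × V}
    (h : t.tour = l₁ ++ a :: (l₂ ++ b :: l₃)) (he : e ∈ a :: (l₂ ++ [b])) :
    e.2 ∈ t.vertices :=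
  snd_mem_vertices_of_mem_tour t (h ▸ List.cons_append_singleton_subset l₁ l₂ l₃ a b he)

variable [DecidableEq V]

theorem pathTo_node (r : V) (cs : List (RTree V)) (w : V) :
    (node r cs).pathTo w =
      if r = w then some [r] else (cs.findSome? (·.pathTo w)).map (r :: ·) := by
  rw [pathTo, List.findSome?_subtype (g := (·.pathTo w)) fun _ _ => rfl, List.unattach_attach]
  split_ifs <;> cases cs.findSome? (·.pathTo w) <;> rfl

@[simp]
theorem pathTo_node_self (r : V) (cs : List (RTree V)) : (node r cs).pathTo r = some [r] := by
  simp [pathTo_node]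

theorem pathTo_node_cons_of_ne {r w : V} (h : r ≠ w) (c : RTree V) (cs : List (RTree V)) :
    (node r (c :: cs)).pathTo w = ((c.pathTo w).map (r :: ·)).or ((node r cs).pathTo w) := by
  simp only [pathTo_node, if_neg h, List.findSome?_cons]
  cases c.pathTo w <;> rfl

theorem exists_root_cons_of_pathTo_eq_some {t : RTree V} {w : V} {P : List V}
    (h : t.pathTo w = some P) : ∃ tail, P = t.root :: tail := by
  obtain ⟨r, cs⟩ := t
  rw [pathTo_node] at h
  split_ifs at h
  · exact ⟨[], (Option.some_inj.1 h).symm⟩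
  · obtain ⟨tail, -, rfl⟩ := Option.map_eq_some_iff.1 h
    exact ⟨tail, rfl⟩

theorem pathTo_eq_none_iff (t : RTree V) (w : V) : t.pathTo w = none ↔ w ∉ t.vertices := by
  induction t using cons_induction with
  | nil r =>
    by_cases h : r = w
    · simp [h]
    · simp [pathTo_node, h, Ne.symm h]
  | cons r c cs ihc ihcs =>
    by_cases h : r = w
    · subst h
      simp
    · simp [pathTo_node_cons_of_ne h, ihc, ihcs]

theorem exists_pathTo_eq_some {t : RTree V} {w : V} (h : w ∈ t.vertices) :
    ∃ P, t.pathTo w = some P :=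
  Option.ne_none_iff_exists'.1 fun h' => (t.pathTo_eq_none_iff w).1 h' h

theorem mem_vertices_of_pathTo_eq_some {t : RTree V} {w : V} {P : List V}
    (h : t.pathTo w = some P) : w ∈ t.vertices := by
  by_contra hw
  simp [(t.pathTo_eq_none_iff w).2 hw] at h

theorem mem_vertices_of_mem_pathTo (t : RTree V) {w a : V} {P : List V}
    (h : t.pathTo w = some P) (ha : a ∈ P) : a ∈ t.vertices := by
  induction t using cons_induction generalizing P with
  | nil r =>
    by_cases hrw : r = w
    · subst hrw
      obtain rfl := Option.some_inj.1 ((pathTo_node_self r []).symm.trans h)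
      simp_all
    · simp [pathTo_node, hrw] at h
  | cons r c cs ihc ihcs =>
    by_cases hrw : r = w
    · subst hrw
      obtain rfl := Option.some_inj.1 ((pathTo_node_self r _).symm.trans h)
      simp_all
    · rw [pathTo_node_cons_of_ne hrw] at h
      cases hc : c.pathTo w with
      | none => simp_all
      | some Pc =>
        simp only [hc, Option.map_some, Option.some_or, Option.some_inj] at h
        subst h
        rcases List.mem_cons.1 ha with rfl | ha
        · simp
        · exact mem_vertices_node_cons.2 (Or.inl (ihc hc ha))

@[simp]
theorem depthD_node_self (r : V) (cs : List (RTree V)) : (node r cs).depthD r = 0 := by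
  simp [depthD]

theorem depthD_root (t : RTree V) : t.depthD t.root = 0 := by
  obtain ⟨r, cs⟩ := t
  exact depthD_node_self r cs

def IsLCA (T : RTree V) (u v y : V) : Prop :=
  ∃ Pu Pv, T.pathTo u = some Pu ∧ T.pathTo v = some Pv ∧
    (commonPrefix Pu Pv).getLast? = some y

def IsChildOnPathTo (T : RTree V) (u y x : V) : Prop :=
  ∃ Pu, T.pathTo u = some Pu ∧ ∃ a b, Pu = a ++ y :: x :: b

theorem isLCA_root_left {t : RTree V} {v : V} (hv : v ∈ t.vertices) :
    IsLCA t t.root v t.root := by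
  obtain ⟨r, cs⟩ := t
  obtain ⟨Pv, hPv⟩ := exists_pathTo_eq_some hv
  obtain ⟨tail, rfl⟩ := exists_root_cons_of_pathTo_eq_some hPv
  exact ⟨[r], _, pathTo_node_self r cs, hPv, by simp [root]⟩

section Embedding

variable {T T' : RTree V} {pre : List V}

theorem depthD_eq_add_of_pathTo_eq_map
    (hpath : ∀ w ∈ T'.vertices, T.pathTo w = (T'.pathTo w).map (pre ++ ·)) {w : V}
    (hw : w ∈ T'.vertices) : T.depthD w = T'.depthD w + pre.length := by
  obtain ⟨P, hP⟩ := exists_pathTo_eq_some hw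
  obtain ⟨tail, rfl⟩ := exists_root_cons_of_pathTo_eq_some hP
  simp [depthD, hpath w hw, hP]
  omega

theorem IsLCA.of_pathTo_eq_map
    (hpath : ∀ w ∈ T'.vertices, T.pathTo w = (T'.pathTo w).map (pre ++ ·)) {u v y : V}
    (h : IsLCA T' u v y) : IsLCA T u v y := by
  obtain ⟨Pu, Pv, hPu, hPv, hy⟩ := h
  refine ⟨pre ++ Pu, pre ++ Pv, ?_, ?_, ?_⟩
  · simp [hpath u (mem_vertices_of_pathTo_eq_some hPu), hPu]
  · simp [hpath v (mem_vertices_of_pathTo_eq_some hPv), hPv]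
  · simp [commonPrefix_append_append, hy]

theorem IsChildOnPathTo.of_pathTo_eq_map
    (hpath : ∀ w ∈ T'.vertices, T.pathTo w = (T'.pathTo w).map (pre ++ ·)) {u y x : V}
    (h : IsChildOnPathTo T' u y x) : IsChildOnPathTo T u y x := by
  obtain ⟨Pu, hPu, a, b, rfl⟩ := h
  exact ⟨pre ++ (a ++ y :: x :: b), by simp [hpath u (mem_vertices_of_pathTo_eq_some hPu), hPu],
    pre ++ a, b, by simp⟩

theorem lca_of_isFirstMin_of_pathTo_eq_map
    (hpath : ∀ w ∈ T'.vertices, T.pathTo w = (T'.pathTo w).map (pre ++ ·))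
    {S : List (V × V)} (hS : ∀ e ∈ S, e.2 ∈ T'.vertices) {u v pu x y : V}
    (ih : IsFirstMin (fun e => T'.depthD e.2) S (x, y) →
      IsLCA T' u v y ∧ ((x, y) ≠ (pu, u) → IsChildOnPathTo T' u y x))
    (h : IsFirstMin (fun e => T.depthD e.2) S (x, y)) :
    IsLCA T u v y ∧ ((x, y) ≠ (pu, u) → IsChildOnPathTo T u y x) := by
  obtain ⟨hlca, hchild⟩ := ih (h.of_comp (fun _ _ h => Nat.add_lt_add_right h pre.length)
    fun e he => depthD_eq_add_of_pathTo_eq_map hpath (hS e he))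
  exact ⟨hlca.of_pathTo_eq_map hpath, fun hne => (hchild hne).of_pathTo_eq_map hpath⟩

end Embedding

section NodeCons

variable {r u v w x y : V} {c : RTree V} {cs : List (RTree V)}

-- `[r] ++ ·` and `[] ++ ·` rather than `r :: ·` and `id`: the shape of the hypothesis `hpath`
-- of the transfer lemmas above.
theorem pathTo_node_cons_of_mem_head (hT : (node r (c :: cs)).vertices.Nodup)
    (hw : w ∈ c.vertices) :
    (node r (c :: cs)).pathTo w = (c.pathTo w).map ([r] ++ ·) := by
  have hrw : r ≠ w := by
    rintro rfl
    exact (nodup_vertices_node_cons hT).2.2 hw (mem_vertices_node_self r cs)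
  obtain ⟨P, hP⟩ := exists_pathTo_eq_some hw
  simp [pathTo_node_cons_of_ne hrw, hP]

theorem pathTo_node_cons_of_mem_tail (hT : (node r (c :: cs)).vertices.Nodup)
    (hw : w ∈ (node r cs).vertices) :
    (node r (c :: cs)).pathTo w = ((node r cs).pathTo w).map ([] ++ ·) := by
  by_cases hrw : r = w
  · subst hrw
    simp
  · have hwc : c.pathTo w = none :=
      (c.pathTo_eq_none_iff w).2 fun hwc => (nodup_vertices_node_cons hT).2.2 hwc hw
    simp [pathTo_node_cons_of_ne hrw, hwc]

theorem depthD_node_cons_of_mem_head (hT : (node r (c :: cs)).vertices.Nodup)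
    (hw : w ∈ c.vertices) : (node r (c :: cs)).depthD w = c.depthD w + 1 :=
  depthD_eq_add_of_pathTo_eq_map (fun _ => pathTo_node_cons_of_mem_head hT) hw

theorem isLCA_node_cons_of_mem_head_of_mem_tail (hT : (node r (c :: cs)).vertices.Nodup)
    (hu : u ∈ c.vertices) (hv : v ∈ (node r cs).vertices) : IsLCA (node r (c :: cs)) u v r := by
  obtain ⟨Pu, hPu⟩ := exists_pathTo_eq_some hu
  obtain ⟨Pv, hPv⟩ := exists_pathTo_eq_some hv
  obtain ⟨tu, rfl⟩ := exists_root_cons_of_pathTo_eq_some hPu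
  obtain ⟨tv, rfl⟩ := exists_root_cons_of_pathTo_eq_some hPv
  have hroot : c.root ∉ tv := fun h => (nodup_vertices_node_cons hT).2.2 (root_mem_vertices c)
    ((node r cs).mem_vertices_of_mem_pathTo hPv (List.mem_cons_of_mem _ h))
  refine ⟨[r] ++ c.root :: tu, r :: tv, ?_, ?_, ?_⟩
  · simp [pathTo_node_cons_of_mem_head hT hu, hPu]
  · simp [pathTo_node_cons_of_mem_tail hT hv, hPv, root]
  · simp [commonPrefix_cons_of_notMem hroot]

theorem isChildOnPathTo_node_cons (hT : (node r (c :: cs)).vertices.Nodup)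
    (hu : u ∈ c.vertices) : IsChildOnPathTo (node r (c :: cs)) u r c.root := by
  obtain ⟨Pu, hPu⟩ := exists_pathTo_eq_some hu
  obtain ⟨tu, rfl⟩ := exists_root_cons_of_pathTo_eq_some hPu
  exact ⟨[] ++ r :: c.root :: tu, by simp [pathTo_node_cons_of_mem_head hT hu, hPu],
    [], tu, rfl⟩

theorem eq_of_isFirstMin_append_up_edge (hT : (node r (c :: cs)).vertices.Nodup)
    {A B : List (V × V)} (hA : ∀ e ∈ A, e.2 ∈ c.vertices)
    (h : IsFirstMin (fun e => (node r (c :: cs)).depthD e.2) (A ++ (w, r) :: B) (x, y)) :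
    (x, y) = (w, r) :=
  h.unique ⟨A, B, rfl, fun _ _ => by simp, fun e he => by
    simp [depthD_node_cons_of_mem_head hT (hA e he)]⟩

theorem eq_of_isFirstMin_cons_down_edge (hT : (node r (c :: cs)).vertices.Nodup)
    {S : List (V × V)} (hS : ∀ e ∈ S, e.2 ∈ c.vertices)
    (h : IsFirstMin (fun e => (node r (c :: cs)).depthD e.2) ((r, c.root) :: S) (x, y)) :
    (x, y) = (r, c.root) :=
  h.unique ⟨[], S, rfl, fun e he => by
    rcases List.mem_cons.1 he with rfl | he
    · exact le_rfl
    · simp [depthD_node_cons_of_mem_head hT (hS e he), depthD_node_cons_of_mem_head hT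
        (root_mem_vertices c), depthD_root], by simp⟩

theorem lca_of_isFirstMin_append_up_edge (hT : (node r (c :: cs)).vertices.Nodup) {pu : V}
    {l₁ m B : List (V × V)}
    (hX : (r, c.root) :: c.tour = l₁ ++ (pu, u) :: m) (hv : v ∈ (node r cs).vertices)
    (h : IsFirstMin (fun e => (node r (c :: cs)).depthD e.2)
      (((pu, u) :: m) ++ (c.root, r) :: B) (x, y)) :
    IsLCA (node r (c :: cs)) u v y ∧
      ((x, y) ≠ (pu, u) → IsChildOnPathTo (node r (c :: cs)) u y x) := by
  have hA : ∀ e ∈ (pu, u) :: m, e.2 ∈ c.vertices := fun e he =>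
    snd_mem_vertices_of_mem_cons_tour (hX ▸ List.mem_append_right l₁ he)
  have hu : u ∈ c.vertices := hA (pu, u) List.mem_cons_self
  obtain ⟨rfl, rfl⟩ := Prod.mk.inj (eq_of_isFirstMin_append_up_edge hT hA h).symm
  exact ⟨isLCA_node_cons_of_mem_head_of_mem_tail hT hu hv,
    fun _ => isChildOnPathTo_node_cons hT hu⟩

theorem lca_of_isFirstMin_cons_down_edge (hT : (node r (c :: cs)).vertices.Nodup)
    {S : List (V × V)} (hS : ∀ e ∈ S, e.2 ∈ c.vertices) (hv : v ∈ c.vertices)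
    (h : IsFirstMin (fun e => (node r (c :: cs)).depthD e.2) ((r, c.root) :: S) (x, y)) :
    IsLCA (node r (c :: cs)) c.root v y ∧
      ((x, y) ≠ (r, c.root) → IsChildOnPathTo (node r (c :: cs)) c.root y x) := by
  obtain ⟨rfl, rfl⟩ := Prod.mk.inj (eq_of_isFirstMin_cons_down_edge hT hS h).symm
  exact ⟨(isLCA_root_left hv).of_pathTo_eq_map fun _ => pathTo_node_cons_of_mem_head hT,
    fun hne => absurd rfl hne⟩

theorem lca_of_isFirstMin_cons_up_edge (hT : (node r (c :: cs)).vertices.Nodup)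
    {S : List (V × V)} (hv : v ∈ (node r cs).vertices)
    (h : IsFirstMin (fun e => (node r (c :: cs)).depthD e.2) ((c.root, r) :: S) (x, y)) :
    IsLCA (node r (c :: cs)) r v y ∧
      ((x, y) ≠ (c.root, r) → IsChildOnPathTo (node r (c :: cs)) r y x) := by
  obtain ⟨rfl, rfl⟩ := Prod.mk.inj
    (eq_of_isFirstMin_append_up_edge hT (A := []) (List.forall_mem_nil _) h).symm
  exact ⟨isLCA_root_left (mem_vertices_node_cons.2 (Or.inr hv)), fun hne => absurd rfl hne⟩

end NodeCons

theorem lca_of_isFirstMin_segment (T : RTree V) (hT : T.vertices.Nodup)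
    {u v pu pv x y : V} {l₁ l₂ l₃ : List (V × V)}
    (hsplit : T.tour = l₁ ++ (pu, u) :: (l₂ ++ (pv, v) :: l₃))
    (h : IsFirstMin (fun e => T.depthD e.2) ((pu, u) :: (l₂ ++ [(pv, v)])) (x, y)) :
    IsLCA T u v y ∧ ((x, y) ≠ (pu, u) → IsChildOnPathTo T u y x) := by
  induction T using cons_induction generalizing u v pu pv l₁ l₂ l₃ with
  | nil r => simp at hsplit
  | cons r c cs ihc ihcs =>
    obtain ⟨hc, hcs, -⟩ := nodup_vertices_node_cons hT
    rw [tour_node_cons] at hsplit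
    rcases List.append_cons_eq_append_cons_cases hsplit.symm with
      ⟨m, hX, hR⟩ | ⟨-, hu, hR⟩ | ⟨m, -, hY⟩
    · rcases List.append_cons_eq_append_cons_cases hR with
        ⟨n, rfl, -⟩ | ⟨rfl, hv, -⟩ | ⟨n, rfl, hY⟩
      · cases l₁ with
        | nil =>
          -- `e_u = (r, c.root)` and `e_v` lies in `tour c`
          obtain ⟨rfl, rfl⟩ := Prod.mk.inj (List.cons_eq_cons.1 hX).1
          have hS : ∀ e ∈ l₂ ++ [(pv, v)], e.2 ∈ c.vertices := fun e he =>
            snd_mem_vertices_of_mem_cons_tour (hX ▸ List.cons_append_singleton_subset [] l₂ n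
              (r, c.root) (pv, v) (List.mem_cons_of_mem _ he))
          exact lca_of_isFirstMin_cons_down_edge hT hS (hS (pv, v) (by simp)) h
        | cons _ l₁ =>
          -- the segment lies in `tour c`
          have hct := (List.cons_eq_cons.1 hX).2
          exact lca_of_isFirstMin_of_pathTo_eq_map (fun _ => pathTo_node_cons_of_mem_head hT)
            (fun _ => snd_mem_vertices_of_tour_eq hct) (ihc hc hct) h
      · -- `e_v = (c.root, r)`
        obtain ⟨rfl, rfl⟩ := Prod.mk.inj hv.symm
        exact lca_of_isFirstMin_append_up_edge hT (B := []) hX (mem_vertices_node_self r cs) h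
      · -- `(c.root, r)` lies strictly between `e_u` and `e_v`
        rw [List.append_assoc, List.cons_append] at h
        exact lca_of_isFirstMin_append_up_edge hT hX (snd_mem_vertices_of_mem_tour _
          (hY ▸ List.mem_append_right n List.mem_cons_self)) h
    · -- `e_u = (c.root, r)`
      obtain ⟨rfl, rfl⟩ := Prod.mk.inj hu.symm
      exact lca_of_isFirstMin_cons_up_edge hT (snd_mem_vertices_of_mem_tour _
        (hR ▸ List.mem_append_right l₂ List.mem_cons_self)) h
    · -- the segment lies in `tour (node r cs)`
      exact lca_of_isFirstMin_of_pathTo_eq_map (fun _ => pathTo_node_cons_of_mem_tail hT)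
        (fun _ => snd_mem_vertices_of_tour_eq hY) (ihcs hcs hY) h

end RTree

theorem stmt14_general {V : Type} [DecidableEq V] (T : RTree V) (hnodup : T.vertices.Nodup)
    (u v pu pv : V)
    (l₁ l₂ l₃ : List (V × V))
    (hsplit : T.tour = l₁ ++ (pu, u) :: (l₂ ++ (pv, v) :: l₃))
    (x y : V) (L₁ L₂ : List (V × V))
    (hL : (pu, u) :: (l₂ ++ [(pv, v)]) = L₁ ++ (x, y) :: L₂)
    (hmin : ∀ e ∈ (pu, u) :: (l₂ ++ [(pv, v)]), T.depthD y ≤ T.depthD e.2)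
    (hfirst : ∀ e ∈ L₁, T.depthD y < T.depthD e.2) :
    (∃ Pu Pv : List V, T.pathTo u = some Pu ∧ T.pathTo v = some Pv ∧
      (commonPrefix Pu Pv).getLast? = some y) ∧
    ((x, y) ≠ (pu, u) → ∃ Pu : List V, T.pathTo u = some Pu ∧
      ∃ a b : List V, Pu = a ++ y :: x :: b) :=
  RTree.lca_of_isFirstMin_segment T hnodup hsplit ⟨L₁, L₂, hL, hmin, hfirst⟩

/-- LCA via range minimum on the Euler tour: let `T` be a finite rooted
tree with distinct vertex labels, `u` and `v` non-root vertices with parents `pu`, `pv`,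
and suppose `e_u = (pu,u)` occurs before `e_v = (pv,v)` in `ET(T)`.  If `ê = (x,y)` is the
first edge of the contiguous sublist of `ET(T)` from `e_u` to `e_v` (inclusive) whose head
has minimum depth among heads of edges of this sublist, then `y` is the lowest common
ancestor of `u` and `v` (the last common vertex of the root-to-`u` and root-to-`v` paths);
moreover, if `ê ≠ e_u` then `x` is the child of `y` on the tree path from `y` to `u`. -/
theorem stmt14 {V : Type} [DecidableEq V] (T : RTree V) (hnodup : T.vertices.Nodup)
    (u v pu pv : V) (tu tv : RTree V)
    (hu : T.SubtreeAt pu tu) (hru : tu.root = u)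
    (hv : T.SubtreeAt pv tv) (hrv : tv.root = v)
    (l₁ l₂ l₃ : List (V × V))
    (hsplit : T.tour = l₁ ++ (pu, u) :: (l₂ ++ (pv, v) :: l₃))
    (x y : V) (L₁ L₂ : List (V × V))
    (hL : (pu, u) :: (l₂ ++ [(pv, v)]) = L₁ ++ (x, y) :: L₂)
    (hmin : ∀ e ∈ (pu, u) :: (l₂ ++ [(pv, v)]), T.depthD y ≤ T.depthD e.2)
    (hfirst : ∀ e ∈ L₁, T.depthD y < T.depthD e.2) :
    (∃ Pu Pv : List V, T.pathTo u = some Pu ∧ T.pathTo v = some Pv ∧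
      (commonPrefix Pu Pv).getLast? = some y) ∧
    ((x, y) ≠ (pu, u) → ∃ Pu : List V, T.pathTo u = some Pu ∧
      ∃ a b : List V, Pu = a ++ y :: x :: b) :=
  stmt14_general T hnodup u v pu pv l₁ l₂ l₃ hsplit x y L₁ L₂ hL hmin hfirst
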